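/- The sets Σ_s^r(λ) and Σ_{s'}^{r'}(λ) are pairwise disjoint for (s, r) ≠ (s', r'), for any λ ∈ P⁺(1). -/

import Mathlib

open Finset

abbrev Wt (n : ℕ) := Fin n → ℤ

def omegaW (n : ℕ) (k : ℕ) : Wt n := fun i => if (i : ℕ) + 1 = k then 1 else 0

def alphaW (n : ℕ) (k : ℕ) : Wt n := fun i =>
  if (i : ℕ) + 1 = k then 2 else if (i : ℕ) + 2 = k ∨ (i : ℕ) = k then -1 else 0

def coeffW (n : ℕ) (l : Wt n) (k : ℕ) : ℤ := ∑ i : Fin n, if (i : ℕ) + 1 = k then l i else 0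

def IsDom (n : ℕ) (l : Wt n) : Prop := ∀ i, 0 ≤ l i

def IsDomOne (n : ℕ) (l : Wt n) : Prop := ∀ i, 0 ≤ l i ∧ l i ≤ 1

def InQplus (n : ℕ) (w : Wt n) : Prop :=
  ∃ c : ℕ → ℕ, w = ∑ k ∈ Finset.Icc 1 n, (c k : ℤ) • alphaW n k

def InQ (n : ℕ) (w : Wt n) : Prop :=
  ∃ c : ℕ → ℤ, w = ∑ k ∈ Finset.Icc 1 n, c k • alphaW n k

noncomputable def formW (n : ℕ) (x y : Wt n) : ℚ :=
  ∑ i : Fin n, ∑ j : Fin n, (x i : ℚ) * (y j : ℚ) *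
    ((((min i.val j.val : ℕ) : ℚ) + 1) * ((n : ℚ) + 1 - (((max i.val j.val : ℕ) : ℚ) + 1)) / ((n : ℚ) + 1))

noncomputable def qpow (r : ℚ) : RatFunc ℚ := if r.den = 1 then RatFunc.X ^ r.num else 0

noncomputable def qint (k : ℤ) : RatFunc ℚ := (1 - RatFunc.X ^ k) / (1 - RatFunc.X)

noncomputable def qbinom (m r : ℤ) : RatFunc ℚ :=
  if 0 ≤ r ∧ r ≤ m then ∏ k ∈ Finset.range r.toNat, qint (m - (k : ℤ)) / qint ((k : ℤ) + 1) else 0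

noncomputable def qbinomQ (m r : ℚ) : RatFunc ℚ :=
  if m.den = 1 ∧ r.den = 1 then qbinom m.num r.num else 0

def alphaSumW (n m p : ℕ) : Wt n := ∑ k ∈ Finset.Icc m p, alphaW n k

def htW (n : ℕ) (l : Wt n) : ℤ := ∑ i, l i

/-- `IsMinIdx n l m` : m = min l = min{ i : l(h_i) > 0 }. -/
def IsMinIdx (n : ℕ) (l : Wt n) (m : ℕ) : Prop :=
  0 < coeffW n l m ∧ ∀ k < m, coeffW n l k = 0

mutual
/-- μ ∈ Σ_s⁰(λ) in the recursive definition of the paper. -/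
inductive Sig0 (n : ℕ) : ℕ → Wt n → Wt n → Prop where
  | base (l : Wt n) : Sig0 n 0 l l
  | step0 (s m : ℕ) (l mu : Wt n) (hs : 0 < s) (hht : 2 ≤ htW n l)
      (hm : IsMinIdx n l m) (h : Sig0 n s (l - omegaW n m) mu) :
      Sig0 n s l (omegaW n m + mu)
  | step1 (s m : ℕ) (l mu : Wt n) (hs : 0 < s) (hht : 2 ≤ htW n l)
      (hm : IsMinIdx n l m) (h : Sig1 n s (l - omegaW n m) mu) :
      Sig0 n s l (omegaW n m + mu)

/-- μ ∈ Σ_s¹(λ) in the recursive definition of the paper. -/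
inductive Sig1 (n : ℕ) : ℕ → Wt n → Wt n → Prop where
  | caseA (s m p : ℕ) (l mu : Wt n) (hht : 2 ≤ htW n l) (hm : IsMinIdx n l m)
      (hp : IsMinIdx n (l - omegaW n m) p) (h0 : coeffW n l (p + 1) = 0)
      (h : Sig0 n s (l - alphaSumW n m p) mu) : Sig1 n (s + 1) l mu
  | caseB1 (m p : ℕ) (l : Wt n) (hht : 2 ≤ htW n l) (hm : IsMinIdx n l m)
      (hp : IsMinIdx n (l - omegaW n m) p) (h1 : coeffW n l (p + 1) = 1) :
      Sig1 n 1 l (l - alphaSumW n m p)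
  | caseB2 (s m p : ℕ) (l mu : Wt n) (hht : 2 ≤ htW n l) (hm : IsMinIdx n l m)
      (hp : IsMinIdx n (l - omegaW n m) p) (h1 : coeffW n l (p + 1) = 1)
      (h : Sig0 n (s + 1) (l - 2 • omegaW n (p + 1) - alphaSumW n m p) mu) :
      Sig1 n (s + 2) l (2 • omegaW n (p + 1) + mu)
  | caseB3 (s m p : ℕ) (l mu : Wt n) (hht : 2 ≤ htW n l) (hm : IsMinIdx n l m)
      (hp : IsMinIdx n (l - omegaW n m) p) (h1 : coeffW n l (p + 1) = 1)
      (h : Sig0 n s (l - 2 • omegaW n (p + 1) - alphaSumW n m p) mu) :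
      Sig1 n (s + 2) l (2 • omegaW n (p + 1) - alphaW n (p + 1) + mu)
end

/-!
Write `μ ∈ Σ_s^r(λ)` as `λ - ∑ c_k α_k`. Along the recursive definition (all intermediate weights
stay in `P⁺(1)`) one gets `c ≥ 0` and: for `r = 0`, `c_q = 0` whenever
`λ(h_1) + ⋯ + λ(h_q) ≤ 1`, in particular `c_m = 0` for `m = min λ`; for `r = 1`, `c_m ≥ 1`.
As the simple roots are linearly independent, `Σ_s^0(λ)` and `Σ_{s'}^1(λ)` are disjoint.

Uniqueness of `s` is proved by recursion on one derivation of `μ`. Since `m` and `p` are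
determined by `λ`, the other derivation uses the same case of the definition, except when
`λ(h_{p+1}) = 1`: there every case reads `μ + e α_{p+1} = 2 ω_{p+1} + ν` with
`ν ∈ Σ_r^0(λ')`, `λ' = λ - 2 ω_{p+1} - (α_m + ⋯ + α_p)`, `s = r + 1 + e`, `e ∈ {0, 1}`, and two
such forms with different `e` would give elements of `Σ^0(λ')` differing by `α_{p+1}`, which the
vanishing of `c_{p+1}` forbids.
-/

variable {n : ℕ}

section Coefficients

lemma coeffW_eq (l : Wt n) (k : ℕ) :
    coeffW n l k = if h : 1 ≤ k ∧ k ≤ n then l ⟨k - 1, by omega⟩ else 0 := by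
  unfold coeffW
  split_ifs with h
  · rw [sum_eq_single ⟨k - 1, by omega⟩ (fun i _ hi => if_neg fun hik => hi (Fin.ext (by
      simp only; omega))) (by simp), if_pos (by simp only; omega)]
  · exact sum_eq_zero fun i _ => if_neg (by omega)

lemma coeffW_eq_zero_of_notMem {l : Wt n} {k : ℕ} (hk : k ∉ Icc 1 n) : coeffW n l k = 0 := by
  rw [coeffW_eq, dif_neg (by simpa using hk)]

lemma mem_Icc_of_coeffW_ne_zero {l : Wt n} {k : ℕ} (h : coeffW n l k ≠ 0) : k ∈ Icc 1 n :=
  not_imp_comm.mp coeffW_eq_zero_of_notMem h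

lemma coeffW_add (x y : Wt n) (k : ℕ) : coeffW n (x + y) k = coeffW n x k + coeffW n y k := by
  simp only [coeffW_eq]; split_ifs <;> simp

lemma coeffW_sub (x y : Wt n) (k : ℕ) : coeffW n (x - y) k = coeffW n x k - coeffW n y k := by
  simp only [coeffW_eq]; split_ifs <;> simp

lemma coeffW_smul (z : ℤ) (x : Wt n) (k : ℕ) : coeffW n (z • x) k = z * coeffW n x k := by
  simp only [coeffW_eq]; split_ifs <;> simp

lemma coeffW_two_nsmul (x : Wt n) (k : ℕ) : coeffW n (2 • x) k = 2 * coeffW n x k := by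
  rw [two_nsmul, coeffW_add]; ring

lemma coeffW_sum {ι : Type*} (s : Finset ι) (f : ι → Wt n) (k : ℕ) :
    coeffW n (∑ i ∈ s, f i) k = ∑ i ∈ s, coeffW n (f i) k := by
  simp only [coeffW_eq]; split_ifs <;> simp

lemma coeffW_omegaW (m k : ℕ) :
    coeffW n (omegaW n m) k = if k = m ∧ 1 ≤ k ∧ k ≤ n then 1 else 0 := by
  by_cases hk : 1 ≤ k ∧ k ≤ n
  · rw [coeffW_eq, dif_pos hk]; simp only [omegaW]; split_ifs <;> omega
  · rw [coeffW_eq, dif_neg hk, if_neg (by tauto)]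

lemma coeffW_alphaW (j : ℕ) {k : ℕ} (hk : k ∈ Icc 1 n) :
    coeffW n (alphaW n j) k = if j = k then 2 else if j = k + 1 ∨ j + 1 = k then -1 else 0 := by
  rw [mem_Icc] at hk
  rw [coeffW_eq, dif_pos hk]; simp only [alphaW]; split_ifs <;> omega

lemma isDomOne_iff_coeffW {l : Wt n} :
    IsDomOne n l ↔ ∀ k, 0 ≤ coeffW n l k ∧ coeffW n l k ≤ 1 := by
  refine ⟨fun hl k => ?_, fun h i => by simpa [coeffW_eq] using h (i + 1)⟩
  rw [coeffW_eq]; split_ifs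
  exacts [hl _, ⟨le_rfl, zero_le_one⟩]

end Coefficients

section RootCombinations

def rootComb (n : ℕ) : (ℕ → ℤ) →+ Wt n where
  toFun c := ∑ k ∈ Icc 1 n, c k • alphaW n k
  map_zero' := by simp
  map_add' c d := by simp [add_smul, sum_add_distrib]

lemma rootComb_apply (c : ℕ → ℤ) : rootComb n c = ∑ k ∈ Icc 1 n, c k • alphaW n k := rfl

lemma rootComb_single {k : ℕ} (hk : k ∈ Icc 1 n) : rootComb n (Pi.single k 1) = alphaW n k := by
  rw [rootComb_apply, sum_eq_single k (fun j _ hj => by simp [hj]) (absurd hk)]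
  simp

lemma alphaSumW_eq_rootComb {a b : ℕ} (ha : 1 ≤ a) (hb : b ≤ n) :
    alphaSumW n a b = rootComb n (fun k => if k ∈ Icc a b then 1 else 0) := by
  simp only [rootComb_apply, ite_smul, one_smul, zero_smul]
  rw [sum_ite_mem, inter_eq_right.mpr (Icc_subset_Icc ha hb), alphaSumW]

lemma coeffW_rootComb {c : ℕ → ℤ} (hc : ∀ k ∉ Icc 1 n, c k = 0) {k : ℕ}
    (hk : k ∈ Icc 1 n) :
    coeffW n (rootComb n c) k = 2 * c k - c (k + 1) - c (k - 1) := by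
  have hterm : ∀ j ∈ Icc 1 n, coeffW n (c j • alphaW n j) k =
      2 * (if j = k then c j else 0) - (if j = k + 1 then c j else 0)
        - (if j = k - 1 then c j else 0) := by
    intro j hj
    rw [mem_Icc] at hj hk
    rw [coeffW_smul, coeffW_alphaW j (mem_Icc.mpr hk)]
    split_ifs <;> first | ring1 | omega
  have hext : ∀ i, (if i ∈ Icc 1 n then c i else 0) = c i := fun i => by
    split_ifs with hi
    · rfl
    · exact (hc i hi).symm
  rw [rootComb_apply, coeffW_sum, sum_congr rfl hterm, sum_sub_distrib, sum_sub_distrib,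
    ← mul_sum, sum_ite_eq', sum_ite_eq', sum_ite_eq', hext, hext, hext]

lemma rootComb_eq_zero {c : ℕ → ℤ} (h : rootComb n c = 0) {k : ℕ} (hk : k ∈ Icc 1 n) :
    c k = 0 := by
  set d : ℕ → ℤ := fun k => if k ∈ Icc 1 n then c k else 0
  have hout : ∀ k ∉ Icc 1 n, d k = 0 := fun k hk => if_neg hk
  have hd : rootComb n d = 0 := by
    rw [← h, rootComb_apply, rootComb_apply]
    exact sum_congr rfl fun k hk => by simp only [d, if_pos hk]
  -- A second-order recurrence with `d 0 = d (n + 1) = 0` forces `d` to be linear, hence zero.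
  have hrec : ∀ k ∈ Icc 1 n, d (k + 1) = 2 * d k - d (k - 1) := fun k hk => by
    have := coeffW_rootComb hout hk
    rw [hd] at this
    simp only [coeffW_eq, Pi.zero_apply, dite_eq_ite, ite_self] at this
    omega
  have hstep : ∀ k ≤ n, d (k + 1) = d k + d 1 := by
    intro k hk
    induction k with
    | zero => simp [hout 0 (by simp)]
    | succ k ih =>
      rw [hrec (k + 1) (mem_Icc.mpr ⟨by omega, hk⟩), ih (by omega), Nat.add_sub_cancel]
      ring
  have hlin : ∀ k ≤ n + 1, d k = k * d 1 := by
    intro k hk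
    induction k with
    | zero => simp [hout 0 (by simp)]
    | succ k ih => rw [hstep k (by omega), ih (by omega)]; push_cast; ring
  have h1 : d 1 = 0 := by
    have := hlin (n + 1) le_rfl
    rw [hout _ (by simp)] at this
    have : ((n : ℤ) + 1) * d 1 = 0 := by push_cast at this; linarith
    exact (mul_eq_zero.mp this).resolve_left (by positivity)
  have := hlin k (by rw [mem_Icc] at hk; omega)
  rw [h1, mul_zero] at this
  simpa only [d, if_pos hk] using this

lemma eq_of_rootComb_eq {c d : ℕ → ℤ} (h : rootComb n c = rootComb n d) {k : ℕ}
    (hk : k ∈ Icc 1 n) : c k = d k :=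
  sub_eq_zero.mp (rootComb_eq_zero (c := c - d) (by rw [map_sub, h, sub_self]) hk)

end RootCombinations

section MinIndex

variable {l : Wt n} {m p : ℕ}

lemma IsMinIdx.unique (h : IsMinIdx n l m) (h' : IsMinIdx n l p) : m = p := by
  rcases lt_trichotomy m p with hlt | rfl | hgt
  · exact absurd (h'.2 m hlt) h.1.ne'
  · rfl
  · exact absurd (h.2 p hgt) h'.1.ne'

lemma IsMinIdx.mem_Icc (h : IsMinIdx n l m) : m ∈ Icc 1 n :=
  mem_Icc_of_coeffW_ne_zero h.1.ne'

lemma IsMinIdx.coeffW_eq_one (hl : IsDomOne n l) (h : IsMinIdx n l m) : coeffW n l m = 1 :=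
  le_antisymm (isDomOne_iff_coeffW.mp hl m).2 h.1

lemma coeffW_sub_omegaW (hm : m ∈ Icc 1 n) (k : ℕ) :
    coeffW n (l - omegaW n m) k = coeffW n l k - if k = m then 1 else 0 := by
  rw [mem_Icc] at hm
  rw [coeffW_sub, coeffW_omegaW]
  split_ifs <;> first | rfl | omega

lemma IsDomOne.sub_omegaW (hl : IsDomOne n l) (hm : IsMinIdx n l m) :
    IsDomOne n (l - omegaW n m) := by
  have hlm := hm.coeffW_eq_one hl
  refine isDomOne_iff_coeffW.mpr fun k => ?_
  have := isDomOne_iff_coeffW.mp hl k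
  rw [coeffW_sub_omegaW hm.mem_Icc]
  split_ifs with hk
  · subst hk; omega
  · omega

lemma IsMinIdx.lt_secondMin (hl : IsDomOne n l) (hm : IsMinIdx n l m)
    (hp : IsMinIdx n (l - omegaW n m) p) : m < p := by
  have hp1 := hp.1
  rw [coeffW_sub_omegaW hm.mem_Icc] at hp1
  have := (isDomOne_iff_coeffW.mp hl p).2
  rcases lt_trichotomy p m with h | rfl | h
  · rw [hm.2 p h, if_neg h.ne] at hp1; omega
  · rw [if_pos rfl] at hp1; omega
  · exact h

lemma IsMinIdx.coeffW_of_le_secondMin (hl : IsDomOne n l) (hm : IsMinIdx n l m)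
    (hp : IsMinIdx n (l - omegaW n m) p) {k : ℕ} (hk : k ≤ p) :
    coeffW n l k = if k = m ∨ k = p then 1 else 0 := by
  have hsub := coeffW_sub_omegaW (l := l) hm.mem_Icc
  have hmp := hm.lt_secondMin hl hp
  split_ifs with h
  · rcases h with rfl | rfl
    · exact hm.coeffW_eq_one hl
    · have := hp.coeffW_eq_one (hl.sub_omegaW hm)
      rwa [hsub, if_neg hmp.ne', sub_zero] at this
  · have := hp.2 k (by omega)
    rwa [hsub, if_neg (by tauto), sub_zero] at this

end MinIndex

section PartialSums

variable {l : Wt n} {m p q : ℕ}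

def partialSum (n : ℕ) (l : Wt n) (q : ℕ) : ℤ := ∑ k ∈ Icc 1 q, coeffW n l k

lemma partialSum_sub (x y : Wt n) (q : ℕ) :
    partialSum n (x - y) q = partialSum n x q - partialSum n y q := by
  simp only [partialSum, coeffW_sub, sum_sub_distrib]

lemma partialSum_omegaW (hm : m ∈ Icc 1 n) (q : ℕ) :
    partialSum n (omegaW n m) q = if m ≤ q then 1 else 0 := by
  rw [mem_Icc] at hm
  have hcoeff : ∀ k ∈ Icc 1 q, coeffW n (omegaW n m) k = if m = k then 1 else 0 := by
    intro k hk
    rw [mem_Icc] at hk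
    rw [coeffW_omegaW]
    split_ifs <;> omega
  rw [partialSum, sum_congr rfl hcoeff, sum_ite_eq]
  simp only [mem_Icc]
  split_ifs <;> omega

lemma partialSum_le_one_of_coeffW_eq {a : ℕ}
    (h : ∀ k ∈ Icc 1 q, coeffW n l k = if k = a then 1 else 0) : partialSum n l q ≤ 1 := by
  rw [partialSum, sum_congr rfl h, sum_ite_eq']
  split_ifs <;> norm_num

lemma IsMinIdx.partialSum_self_le_one (hl : IsDomOne n l) (hm : IsMinIdx n l m) :
    partialSum n l m ≤ 1 := by
  refine partialSum_le_one_of_coeffW_eq (a := m) fun k hk => ?_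
  split_ifs with h
  · exact h ▸ hm.coeffW_eq_one hl
  · exact hm.2 k (by rw [Finset.mem_Icc] at hk; omega)

lemma IsMinIdx.partialSum_eq_zero (hm : IsMinIdx n l m) (hq : q < m) : partialSum n l q = 0 :=
  sum_eq_zero fun k hk => hm.2 k (by rw [Finset.mem_Icc] at hk; omega)

lemma IsDomOne.sum_coeffW_le_partialSum (hl : IsDomOne n l) {s : Finset ℕ} (hs : s ⊆ Icc 1 q) :
    ∑ k ∈ s, coeffW n l k ≤ partialSum n l q :=
  sum_le_sum_of_subset_of_nonneg hs fun k _ _ => (isDomOne_iff_coeffW.mp hl k).1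

lemma IsMinIdx.lt_of_partialSum_nonpos (hl : IsDomOne n l) (hm : IsMinIdx n l m)
    (hq : partialSum n l q ≤ 0) : q < m := by
  by_contra h
  have hm1 := (Finset.mem_Icc.mp hm.mem_Icc).1
  have := hl.sum_coeffW_le_partialSum (q := q) (s := {m})
    (singleton_subset_iff.mpr (Finset.mem_Icc.mpr ⟨hm1, by omega⟩))
  rw [sum_singleton, hm.coeffW_eq_one hl] at this
  omega

lemma IsMinIdx.lt_secondMin_of_partialSum_le_one (hl : IsDomOne n l) (hm : IsMinIdx n l m)
    (hp : IsMinIdx n (l - omegaW n m) p) (hq : partialSum n l q ≤ 1) : q < p := by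
  by_contra h
  have hmp := hm.lt_secondMin hl hp
  have hm1 := (Finset.mem_Icc.mp hm.mem_Icc).1
  have := hl.sum_coeffW_le_partialSum (q := q) (s := {m, p}) (by
    intro k; simp only [mem_insert, mem_singleton, Finset.mem_Icc]; omega)
  rw [sum_pair hmp.ne, hm.coeffW_of_le_secondMin hl hp hmp.le,
    hm.coeffW_of_le_secondMin hl hp le_rfl] at this
  rw [if_pos (Or.inl rfl), if_pos (Or.inr rfl)] at this
  omega

lemma IsMinIdx.partialSum_sub_omegaW_nonpos (hm : IsMinIdx n l m) (hq : partialSum n l q ≤ 1) :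
    partialSum n (l - omegaW n m) q ≤ 0 := by
  rw [partialSum_sub, partialSum_omegaW hm.mem_Icc]
  split_ifs with h
  · omega
  · rw [hm.partialSum_eq_zero (by omega)]; rfl

end PartialSums

section RootStrings

variable {m p : ℕ}

lemma alphaSumW_eq_alphaW_add (h : m ≤ p) :
    alphaSumW n m p = alphaW n m + alphaSumW n (m + 1) p := by
  rw [alphaSumW, Icc_eq_cons_Ioc h, sum_cons, ← Icc_add_one_left_eq_Ioc, alphaSumW]

lemma alphaSumW_succ_right (h : m ≤ p + 1) :
    alphaSumW n m (p + 1) = alphaSumW n m p + alphaW n (p + 1) :=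
  sum_Icc_succ_top h _

lemma coeffW_alphaSumW (hm : 1 ≤ m) (hmp : m < p) (hp : p ≤ n) (k : ℕ) :
    coeffW n (alphaSumW n m p) k =
      if k = m ∨ k = p then 1
      else if (1 ≤ k ∧ k + 1 = m) ∨ (k = p + 1 ∧ k ≤ n) then -1 else 0 := by
  rw [alphaSumW_eq_rootComb hm hp]
  by_cases hk : k ∈ Icc 1 n
  · rw [coeffW_rootComb (fun j hj => if_neg fun hj' => hj (Icc_subset_Icc hm hp hj')) hk]
    simp only [mem_Icc] at hk ⊢
    split_ifs <;> omega
  · rw [coeffW_eq_zero_of_notMem hk]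
    simp only [mem_Icc] at hk
    split_ifs <;> omega

end RootStrings

section Reduction

variable {l : Wt n} {m p : ℕ}

lemma IsMinIdx.coeffW_sub_alphaSumW (hl : IsDomOne n l) (hm : IsMinIdx n l m)
    (hp : IsMinIdx n (l - omegaW n m) p) {k : ℕ} (hk : k ∈ Icc 1 p) :
    coeffW n (l - alphaSumW n m p) k = if k = m - 1 then 1 else 0 := by
  have hmp := hm.lt_secondMin hl hp
  have := Finset.mem_Icc.mp hm.mem_Icc
  have := Finset.mem_Icc.mp hp.mem_Icc
  rw [Finset.mem_Icc] at hk
  rw [coeffW_sub, coeffW_alphaSumW (by omega) hmp (by omega),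
    hm.coeffW_of_le_secondMin hl hp hk.2]
  split_ifs <;> omega

lemma IsMinIdx.isDomOne_sub_alphaSumW (hl : IsDomOne n l) (hm : IsMinIdx n l m)
    (hp : IsMinIdx n (l - omegaW n m) p) (h0 : coeffW n l (p + 1) = 0) :
    IsDomOne n (l - alphaSumW n m p) := by
  have hmp := hm.lt_secondMin hl hp
  have := Finset.mem_Icc.mp hm.mem_Icc
  have := Finset.mem_Icc.mp hp.mem_Icc
  refine isDomOne_iff_coeffW.mpr fun k => ?_
  have := isDomOne_iff_coeffW.mp hl k
  rw [coeffW_sub, coeffW_alphaSumW (by omega) hmp (by omega)]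
  rcases lt_trichotomy k (p + 1) with hk | rfl | hk
  · rw [hm.coeffW_of_le_secondMin hl hp (by omega)]; split_ifs <;> omega
  · rw [h0]; split_ifs <;> omega
  · split_ifs <;> omega

lemma IsMinIdx.isDomOne_sub_two_omegaW_sub_alphaSumW (hl : IsDomOne n l) (hm : IsMinIdx n l m)
    (hp : IsMinIdx n (l - omegaW n m) p) (h1 : coeffW n l (p + 1) = 1) :
    IsDomOne n (l - 2 • omegaW n (p + 1) - alphaSumW n m p) := by
  have hmp := hm.lt_secondMin hl hp
  have := Finset.mem_Icc.mp hm.mem_Icc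
  have := Finset.mem_Icc.mp (mem_Icc_of_coeffW_ne_zero (l := l) (k := p + 1) (by omega))
  refine isDomOne_iff_coeffW.mpr fun k => ?_
  have := isDomOne_iff_coeffW.mp hl k
  rw [coeffW_sub, coeffW_sub, coeffW_two_nsmul, coeffW_omegaW,
    coeffW_alphaSumW (by omega) hmp (by omega)]
  rcases lt_trichotomy k (p + 1) with hk | rfl | hk
  · rw [hm.coeffW_of_le_secondMin hl hp (by omega)]; split_ifs <;> omega
  · rw [h1]; split_ifs <;> omega
  · split_ifs <;> omega

lemma IsMinIdx.partialSum_sub_alphaSumW_le_one (hl : IsDomOne n l) (hm : IsMinIdx n l m)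
    (hp : IsMinIdx n (l - omegaW n m) p) {q : ℕ} (hq : q ≤ p) :
    partialSum n (l - alphaSumW n m p) q ≤ 1 :=
  partialSum_le_one_of_coeffW_eq fun _ hk =>
    hm.coeffW_sub_alphaSumW hl hp (Icc_subset_Icc le_rfl hq hk)

lemma IsMinIdx.partialSum_sub_two_omegaW_sub_alphaSumW_le_one (hl : IsDomOne n l)
    (hm : IsMinIdx n l m) (hp : IsMinIdx n (l - omegaW n m) p) (h1 : coeffW n l (p + 1) = 1)
    {q : ℕ} (hq : q ≤ p + 1) :
    partialSum n (l - 2 • omegaW n (p + 1) - alphaSumW n m p) q ≤ 1 := by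
  refine partialSum_le_one_of_coeffW_eq (a := m - 1) fun k hk => ?_
  have hmp := hm.lt_secondMin hl hp
  have := Finset.mem_Icc.mp hm.mem_Icc
  rw [Finset.mem_Icc] at hk
  rw [sub_right_comm, coeffW_sub, coeffW_two_nsmul, coeffW_omegaW]
  rcases lt_or_eq_of_le (hk.2.trans hq) with hk' | rfl
  · rw [hm.coeffW_sub_alphaSumW hl hp (Finset.mem_Icc.mpr ⟨hk.1, by omega⟩)]
    split_ifs <;> omega
  · have := Finset.mem_Icc.mp (mem_Icc_of_coeffW_ne_zero (l := l) (k := p + 1) (by omega))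
    rw [coeffW_sub, h1, coeffW_alphaSumW (by omega) hmp (by omega)]
    split_ifs <;> omega

end Reduction

section RootDescent

def RootDescent (n : ℕ) (l : Wt n) (j : ℤ) (μ : Wt n) : Prop :=
  ∃ c : ℕ → ℤ, l - μ = rootComb n c ∧ (∀ k, 0 ≤ c k) ∧
    ∀ q, partialSum n l q ≤ j → c q = 0

variable {l l' μ μ' w : Wt n} {j j' : ℤ}

lemma RootDescent.refl (l : Wt n) (j : ℤ) : RootDescent n l j l :=
  ⟨0, by rw [sub_self, map_zero], fun _ => le_rfl, fun _ _ => rfl⟩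

lemma RootDescent.extend (h : RootDescent n l' j' μ') (hw : RootDescent n l j (l - w))
    (hμ : l - μ = l' - μ' + w)
    (hj : ∀ q, partialSum n l q ≤ j → partialSum n l' q ≤ j') :
    RootDescent n l j μ := by
  obtain ⟨c, hc, hc0, hcj⟩ := h
  obtain ⟨d, hd, hd0, hdj⟩ := hw
  refine ⟨c + d, ?_, fun k => add_nonneg (hc0 k) (hd0 k), fun q hq => ?_⟩
  · rw [map_add, hμ, hc, ← hd, sub_sub_cancel]
  · simp [hcj q (hj q hq), hdj q hq]

lemma rootDescent_sub_alphaSumW {a b : ℕ} (ha : 1 ≤ a) (hb : b ≤ n)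
    (h : ∀ q, partialSum n l q ≤ j → q < a) : RootDescent n l j (l - alphaSumW n a b) := by
  refine ⟨_, by rw [sub_sub_cancel, alphaSumW_eq_rootComb ha hb], fun k => ?_, fun q hq => ?_⟩
  · split_ifs <;> norm_num
  · have := h q hq
    exact if_neg fun hq' => by rw [mem_Icc] at hq'; omega

lemma IsMinIdx.rootDescent_sub_alphaSumW_succ {m b : ℕ} (hl : IsDomOne n l)
    (hm : IsMinIdx n l m) (hb : b ≤ n) : RootDescent n l 0 (l - alphaSumW n (m + 1) b) :=
  rootDescent_sub_alphaSumW (by omega) hb fun _ hq =>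
    Nat.lt_succ_of_lt (hm.lt_of_partialSum_nonpos hl hq)

lemma RootDescent.false_of_add_alphaW {k : ℕ} (h : RootDescent n l 1 μ)
    (h' : RootDescent n l j (μ + alphaW n k)) (hk : k ∈ Icc 1 n) (hkl : partialSum n l k ≤ 1) :
    False := by
  obtain ⟨c, hc, -, hc1⟩ := h
  obtain ⟨c', hc', hc'0, -⟩ := h'
  have hcc : rootComb n c = rootComb n (c' + Pi.single k 1) := by
    rw [map_add, rootComb_single hk, ← hc, ← hc']
    abel
  have := eq_of_rootComb_eq hcc hk
  have := hc'0 k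
  simp only [hc1 k hkl, Pi.add_apply, Pi.single_eq_same] at *
  omega

end RootDescent

mutual

theorem Sig0.rootDescent {s : ℕ} {l μ : Wt n} (hl : IsDomOne n l) (h : Sig0 n s l μ) :
    RootDescent n l 1 μ := by
  match h with
  | .base _ => exact .refl l 1
  | .step0 _ m _ mu _ _ hm hsub =>
    refine (hsub.rootDescent (hl.sub_omegaW hm)).extend (w := 0) (by simpa using .refl l 1)
      (by abel) fun q hq => ?_
    exact (hm.partialSum_sub_omegaW_nonpos hq).trans zero_le_one
  | .step1 _ m _ mu _ _ hm hsub =>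
    obtain ⟨p, hp, hdesc⟩ := hsub.rootDescent (hl.sub_omegaW hm)
    have hsingle : RootDescent n l 1 (l - alphaW n p) := by
      have hp1 := Finset.mem_Icc.mp hp.mem_Icc
      simpa [alphaSumW] using rootDescent_sub_alphaSumW (a := p) (b := p) hp1.1 hp1.2
        fun q hq => hm.lt_secondMin_of_partialSum_le_one hl hp hq
    exact hdesc.extend hsingle (by abel) fun q hq => hm.partialSum_sub_omegaW_nonpos hq

theorem Sig1.rootDescent {s : ℕ} {l μ : Wt n} (hl : IsDomOne n l) (h : Sig1 n s l μ) :
    ∃ m, IsMinIdx n l m ∧ RootDescent n l 0 (μ + alphaW n m) := by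
  match h with
  | .caseA _ m p _ mu _ hm hp h0 hsub =>
    have hmp := hm.lt_secondMin hl hp
    refine ⟨m, hm, (hsub.rootDescent (hm.isDomOne_sub_alphaSumW hl hp h0)).extend
      (hm.rootDescent_sub_alphaSumW_succ hl (Finset.mem_Icc.mp hp.mem_Icc).2) ?_ fun q hq => ?_⟩
    · rw [alphaSumW_eq_alphaW_add hmp.le]; abel
    · have := hm.lt_of_partialSum_nonpos hl hq
      exact hm.partialSum_sub_alphaSumW_le_one hl hp (by omega)
  | .caseB1 m p _ _ hm hp _ =>
    have hmp := hm.lt_secondMin hl hp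
    refine ⟨m, hm, ?_⟩
    rw [show l - alphaSumW n m p + alphaW n m = l - alphaSumW n (m + 1) p by
      rw [alphaSumW_eq_alphaW_add hmp.le]; abel]
    exact hm.rootDescent_sub_alphaSumW_succ hl (Finset.mem_Icc.mp hp.mem_Icc).2
  | .caseB2 _ m p _ mu _ hm hp h1 hsub =>
    have hmp := hm.lt_secondMin hl hp
    refine ⟨m, hm, (hsub.rootDescent
      (hm.isDomOne_sub_two_omegaW_sub_alphaSumW hl hp h1)).extend
      (hm.rootDescent_sub_alphaSumW_succ hl (Finset.mem_Icc.mp hp.mem_Icc).2) ?_ fun q hq => ?_⟩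
    · rw [alphaSumW_eq_alphaW_add hmp.le]; abel
    · have := hm.lt_of_partialSum_nonpos hl hq
      exact hm.partialSum_sub_two_omegaW_sub_alphaSumW_le_one hl hp h1 (by omega)
  | .caseB3 _ m p _ mu _ hm hp h1 hsub =>
    have hmp := hm.lt_secondMin hl hp
    have hpn := (Finset.mem_Icc.mp (mem_Icc_of_coeffW_ne_zero (l := l) (k := p + 1)
      (by omega))).2
    refine ⟨m, hm, (hsub.rootDescent
      (hm.isDomOne_sub_two_omegaW_sub_alphaSumW hl hp h1)).extend
      (hm.rootDescent_sub_alphaSumW_succ hl hpn) ?_ fun q hq => ?_⟩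
    · rw [alphaSumW_succ_right (by omega), alphaSumW_eq_alphaW_add hmp.le]; abel
    · have := hm.lt_of_partialSum_nonpos hl hq
      exact hm.partialSum_sub_two_omegaW_sub_alphaSumW_le_one hl hp h1 (by omega)

end

theorem Sig0.not_sig1 {s s' : ℕ} {l μ : Wt n} (hl : IsDomOne n l) (h : Sig0 n s l μ) :
    ¬ Sig1 n s' l μ := fun h' => by
  obtain ⟨m, hm, hdesc⟩ := h'.rootDescent hl
  exact (h.rootDescent hl).false_of_add_alphaW hdesc hm.mem_Icc (hm.partialSum_self_le_one hl)

theorem Sig0.index_eq_zero_of_self {s : ℕ} {l μ : Wt n} (hl : IsDomOne n l) (h : Sig0 n s l μ)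
    (hμ : μ = l) : s = 0 := by
  match h with
  | .base _ => rfl
  | .step0 _ m _ mu _ _ hm hsub =>
    exact hsub.index_eq_zero_of_self (hl.sub_omegaW hm) (by rw [← hμ]; abel)
  | .step1 _ m _ mu _ _ hm hsub =>
    rw [show mu = l - omegaW n m by rw [← hμ]; abel] at hsub
    exact ((Sig0.base _).not_sig1 (hl.sub_omegaW hm) hsub).elim

lemma Sig0.exists_of_ne {s : ℕ} {l μ : Wt n} (h : Sig0 n s l μ) (hμ : μ ≠ l) :
    ∃ m ν, IsMinIdx n l m ∧ μ = omegaW n m + ν ∧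
      (Sig0 n s (l - omegaW n m) ν ∨ Sig1 n s (l - omegaW n m) ν) := by
  cases h with
  | base => exact absurd rfl hμ
  | step0 _ m _ ν _ _ hm hsub => exact ⟨m, ν, hm, rfl, .inl hsub⟩
  | step1 _ m _ ν _ _ hm hsub => exact ⟨m, ν, hm, rfl, .inr hsub⟩

section Inversion

variable {l : Wt n} {m p : ℕ}

lemma Sig1.exists_of_coeffW_eq_zero {s : ℕ} {μ : Wt n} (h : Sig1 n s l μ) (hm : IsMinIdx n l m)
    (hp : IsMinIdx n (l - omegaW n m) p) (h0 : coeffW n l (p + 1) = 0) :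
    ∃ t, s = t + 1 ∧ Sig0 n t (l - alphaSumW n m p) μ := by
  cases h with
  | caseA t _ _ _ _ _ hm' hp' _ hsub =>
    obtain rfl := hm.unique hm'
    obtain rfl := hp.unique hp'
    exact ⟨t, rfl, hsub⟩
  | caseB1 _ _ _ _ hm' hp' h1 | caseB2 _ _ _ _ _ _ hm' hp' h1 _
  | caseB3 _ _ _ _ _ _ hm' hp' h1 _ =>
    obtain rfl := hm.unique hm'
    obtain rfl := hp.unique hp'
    omega

lemma Sig1.exists_of_coeffW_eq_one {s : ℕ} {μ : Wt n} (h : Sig1 n s l μ) (hm : IsMinIdx n l m)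
    (hp : IsMinIdx n (l - omegaW n m) p) (h1 : coeffW n l (p + 1) = 1) :
    ∃ r e ν, e ≤ 1 ∧ s = r + 1 + e ∧
      μ + e • alphaW n (p + 1) = 2 • omegaW n (p + 1) + ν ∧
      Sig0 n r (l - 2 • omegaW n (p + 1) - alphaSumW n m p) ν := by
  cases h with
  | caseA _ _ _ _ _ _ hm' hp' h0 _ =>
    obtain rfl := hm.unique hm'
    obtain rfl := hp.unique hp'
    omega
  | caseB1 _ _ _ _ hm' hp' _ =>
    obtain rfl := hm.unique hm'
    obtain rfl := hp.unique hp'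
    exact ⟨0, 0, _, zero_le_one, rfl, by rw [zero_smul, add_zero]; abel, .base _⟩
  | caseB2 t _ _ _ ν _ hm' hp' _ hsub =>
    obtain rfl := hm.unique hm'
    obtain rfl := hp.unique hp'
    exact ⟨t + 1, 0, ν, zero_le_one, rfl, by rw [zero_smul, add_zero], hsub⟩
  | caseB3 t _ _ _ ν _ hm' hp' _ hsub =>
    obtain rfl := hm.unique hm'
    obtain rfl := hp.unique hp'
    exact ⟨t, 1, ν, le_rfl, by ring, by rw [one_smul]; abel, hsub⟩

end Inversion

-- `hC1` is supplied by the structural recursion in `Sig1.index_unique`.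
lemma Sig0.index_add_eq {l ν ν' : Wt n} {k r r' e e' : ℕ} (hl : IsDomOne n l)
    (hk : k ∈ Icc 1 n) (hkl : partialSum n l k ≤ 1)
    (hν : Sig0 n r l ν) (hν' : Sig0 n r' l ν')
    (he : e ≤ 1) (he' : e' ≤ 1) (heq : ν + e' • alphaW n k = ν' + e • alphaW n k)
    (hC1 : ∀ r', Sig0 n r' l ν → r = r') : r + e = r' + e' := by
  interval_cases e <;> interval_cases e' <;> simp only [zero_smul, one_smul, add_zero] at heq
  · rw [hC1 r' (heq ▸ hν')]
  · exact ((hν.rootDescent hl).false_of_add_alphaW (heq ▸ hν' |>.rootDescent hl) hk hkl).elim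
  · exact ((hν'.rootDescent hl).false_of_add_alphaW (heq ▸ hν |>.rootDescent hl) hk hkl).elim
  · rw [hC1 r' (add_right_cancel heq ▸ hν')]

lemma Sig1.index_eq_of_coeffW_eq_one {l μ ν : Wt n} {m p s' r e : ℕ} (hl : IsDomOne n l)
    (hm : IsMinIdx n l m) (hp : IsMinIdx n (l - omegaW n m) p) (h1 : coeffW n l (p + 1) = 1)
    (he : e ≤ 1) (hμ : μ + e • alphaW n (p + 1) = 2 • omegaW n (p + 1) + ν)
    (hν : Sig0 n r (l - 2 • omegaW n (p + 1) - alphaSumW n m p) ν)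
    (hC1 : ∀ r', Sig0 n r' (l - 2 • omegaW n (p + 1) - alphaSumW n m p) ν → r = r')
    (h' : Sig1 n s' l μ) : r + 1 + e = s' := by
  obtain ⟨r', e', ν', he', rfl, hμ', hν'⟩ := h'.exists_of_coeffW_eq_one hm hp h1
  have hpn : p + 1 ∈ Icc 1 n := mem_Icc_of_coeffW_ne_zero (l := l) (by omega)
  have := Sig0.index_add_eq (hm.isDomOne_sub_two_omegaW_sub_alphaSumW hl hp h1) hpn
    (hm.partialSum_sub_two_omegaW_sub_alphaSumW_le_one hl hp h1 le_rfl) hν hν' he he' ?_ hC1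
  · omega
  · rw [eq_sub_of_add_eq' hμ.symm, eq_sub_of_add_eq' hμ'.symm]; abel

mutual

theorem Sig0.index_unique {s s' : ℕ} {l μ : Wt n} (hl : IsDomOne n l) (h : Sig0 n s l μ)
    (h' : Sig0 n s' l μ) : s = s' := by
  by_cases hμ : μ = l
  · rw [h.index_eq_zero_of_self hl hμ, h'.index_eq_zero_of_self hl hμ]
  obtain ⟨m', ν', hm', hμ', hsub'⟩ := h'.exists_of_ne hμ
  match h with
  | .base _ => exact absurd rfl hμ
  | .step0 _ m _ ν _ _ hm hsub =>
    obtain rfl := hm.unique hm'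
    obtain rfl := add_left_cancel hμ'
    rcases hsub' with hsub' | hsub'
    · exact hsub.index_unique (hl.sub_omegaW hm) hsub'
    · exact (hsub.not_sig1 (hl.sub_omegaW hm) hsub').elim
  | .step1 _ m _ ν _ _ hm hsub =>
    obtain rfl := hm.unique hm'
    obtain rfl := add_left_cancel hμ'
    rcases hsub' with hsub' | hsub'
    · exact (hsub'.not_sig1 (hl.sub_omegaW hm) hsub).elim
    · exact hsub.index_unique (hl.sub_omegaW hm) hsub'

theorem Sig1.index_unique {s s' : ℕ} {l μ : Wt n} (hl : IsDomOne n l) (h : Sig1 n s l μ)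
    (h' : Sig1 n s' l μ) : s = s' := by
  match h with
  | .caseA _ m p _ _ _ hm hp h0 hsub =>
    obtain ⟨t, rfl, hsub'⟩ := h'.exists_of_coeffW_eq_zero hm hp h0
    rw [hsub.index_unique (hm.isDomOne_sub_alphaSumW hl hp h0) hsub']
  | .caseB1 m p _ _ hm hp h1 =>
    exact Sig1.index_eq_of_coeffW_eq_one hl hm hp h1 (e := 0) zero_le_one
      (by rw [zero_smul, add_zero]; abel) (.base _)
      (fun _ h'' => (h''.index_eq_zero_of_self
        (hm.isDomOne_sub_two_omegaW_sub_alphaSumW hl hp h1) rfl).symm) h'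
  | .caseB2 _ m p _ _ _ hm hp h1 hsub =>
    exact Sig1.index_eq_of_coeffW_eq_one hl hm hp h1 (e := 0) zero_le_one
      (by rw [zero_smul, add_zero]) hsub
      (fun _ h'' => hsub.index_unique
        (hm.isDomOne_sub_two_omegaW_sub_alphaSumW hl hp h1) h'') h'
  | .caseB3 _ m p _ _ _ hm hp h1 hsub =>
    exact Sig1.index_eq_of_coeffW_eq_one hl hm hp h1 (e := 1) le_rfl
      (by rw [one_smul]; abel) hsub
      (fun _ h'' => hsub.index_unique
        (hm.isDomOne_sub_two_omegaW_sub_alphaSumW hl hp h1) h'') h'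

end

/-- the sets Σ_s^r(λ) are pairwise disjoint for distinct (s, r). -/
theorem sigma_disjoint (n : ℕ) (l : Wt n) (hl : IsDomOne n l) :
    (∀ s s' mu, Sig0 n s l mu → Sig0 n s' l mu → s = s') ∧
    (∀ s s' mu, Sig1 n s l mu → Sig1 n s' l mu → s = s') ∧
    (∀ s s' mu, Sig0 n s l mu → Sig1 n s' l mu → False) :=
  ⟨fun _ _ _ h h' => h.index_unique hl h', fun _ _ _ h h' => h.index_unique hl h',
    fun _ _ _ h h' => h.not_sig1 hl h'⟩
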